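/- arXiv:2507.09136 — 2 statements merged into one kernel-verified Lean document; each statement's English description precedes it below -/
import Mathlib

section
/- Let L be any modal logic with Cl ⊆ L ⊆ Grz.3, closed under uniform substitution. With β_k as defined (δ₀ = □q, δ_{n+1} = q ∧ ◇(¬q ∧ ◇δ_n), α_n = δ_n ∧ ¬δ_{n+1}, β_n = ◇(p ∧ α_n)), let s be the substitution sending variable p_k to β_k. Then for every purely classical (modality-free) formula φ in variables p_1,...,p_n: φ is a classical tautology if and only if s(φ) ∈ L. -/
inductive MF : Type
  | var : ℕ → MF
  | bot : MF
  | imp : MF → MF → MF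
  | box : MF → MF

def MF.neg (a : MF) : MF := a.imp .bot
def MF.top : MF := MF.neg .bot
def MF.and (a b : MF) : MF := (a.imp b.neg).neg
def MF.or (a b : MF) : MF := a.neg.imp b
def MF.iff (a b : MF) : MF := (a.imp b).and (b.imp a)
def MF.dia (a : MF) : MF := (MF.box a.neg).neg
def MF.boxPlus (a : MF) : MF := a.and a.box

/-- Standard Kripke semantics. -/
def sat {W : Type} (R : W → W → Prop) (V : ℕ → W → Prop) : W → MF → Prop
  | w, .var n => V n w
  | _, .bot => False
  | w, .imp a b => sat R V w a → sat R V w b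
  | w, .box a => ∀ u, R w u → sat R V u a

/-- Modality-free (purely classical) formulas. -/
def MF.boxFree : MF → Prop
  | .var _ => True
  | .bot => True
  | .imp a b => a.boxFree ∧ b.boxFree
  | .box _ => False

/-- Variable-free formulas. -/
def MF.varFree : MF → Prop
  | .var _ => False
  | .bot => True
  | .imp a b => a.varFree ∧ b.varFree
  | .box a => a.varFree

/-- Classical Boolean evaluation (the `box` case is irrelevant: used on box-free formulas). -/
def evalb (v : ℕ → Bool) : MF → Bool
  | .var n => v n
  | .bot => false
  | .imp a b => !(evalb v a) || evalb v b
  | .box _ => false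

/-- Classical propositional logic: modality-free tautologies. -/
def Cl : Set MF := {φ | φ.boxFree ∧ ∀ v : ℕ → Bool, evalb v φ = true}

/-- Uniform substitution. -/
def subst (s : ℕ → MF) : MF → MF
  | .var n => s n
  | .bot => .bot
  | .imp a b => .imp (subst s a) (subst s b)
  | .box a => .box (subst s a)

def boxIter : ℕ → MF → MF
  | 0, a => a
  | n+1, a => .box (boxIter n a)

/-- The minimal normal modal logic K (semantically: validity in all Kripke frames). -/
def Ksem : Set MF := {φ | ∀ (W : Type) (R : W → W → Prop) (V : ℕ → W → Prop) (w : W), sat R V w φ}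

def pv : MF := .var 0
def qv : MF := .var 1

def delta : ℕ → MF
  | 0 => qv.box
  | n+1 => qv.and ((qv.neg.and (delta n).dia).dia)
def alpha (n : ℕ) : MF := (delta n).and (delta (n+1)).neg
def beta (n : ℕ) : MF := (pv.and (alpha n)).dia

def delta' : ℕ → MF
  | 0 => MF.bot.box
  | n+1 => (delta' n).dia
def alpha' (n : ℕ) : MF := (delta' n).and (delta' (n+1)).neg
def beta' (n : ℕ) : MF := (pv.and (alpha' n)).dia

def alpha'' (n : ℕ) : MF := ((MF.top.dia.boxPlus).dia).and ((delta' n).and (delta' (n+1)).neg)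
def beta'' (n : ℕ) : MF := (alpha'' n).dia

def grzAx : MF := ((((pv.imp pv.box).box).imp pv).box).imp pv
def lin3Ax : MF := (((pv.box).imp qv).box).or (((qv.box).imp pv).box)
def loebAx : MF := (((pv.box).imp pv).box).imp pv.box
def lin3'Ax : MF := (((pv.box).imp qv).box).or (((qv.boxPlus).imp pv).box)

/-- The frame ⟨ω ∪ {ω}, ≥⟩ : worlds are `ℕ∞`, `x R y` iff `x ≥ y`. -/
def Rge (x y : ℕ∞) : Prop := y ≤ x
/-- The frame ⟨ω ∪ {ω}, >⟩ : worlds are `ℕ∞`, `x R y` iff `x > y`. -/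
def Rgt (x y : ℕ∞) : Prop := y < x

/-- Raw worlds of the frame F''. -/
inductive CW : Type
  | root : CW
  | sink : CW
  | chain : ℕ → ℕ → CW

def CW.valid : CW → Prop
  | .chain k m => 1 ≤ k ∧ m ≤ k
  | _ => True

/-- Worlds of F'': `w`, `w*`, and `w^k_m` for `k ≥ 1`, `0 ≤ m ≤ k`. -/
def W'' : Type := {x : CW // x.valid}

/-- The accessibility relation of F'' (depending on the Boolean valuation `v`):
`w` sees `w*` and every `w^k_m` with `m ≥ 1`, but sees `w^k_0` only if `v k = true`;
`w^k_m R w^k_{m+1}`; `w^k_0 R w*`; `w*` has no successors. -/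
def Rc (v : ℕ → Bool) : CW → CW → Prop
  | .root, .sink => True
  | .root, .chain k m => 1 ≤ m ∨ v k = true
  | .chain k m, .chain k' m' => k' = k ∧ m' = m + 1
  | .chain _ m, .sink => m = 0
  | _, _ => False

def Rf (v : ℕ → Bool) (x y : W'') : Prop := Rc v x.val y.val

def wRoot : W'' := ⟨CW.root, trivial⟩
def wSink : W'' := ⟨CW.sink, trivial⟩
def wChain (k m : ℕ) (h : 1 ≤ k ∧ m ≤ k) : W'' := ⟨CW.chain k m, h⟩

/-- Grz.3, semantically: the logic of Noetherian linear partial orders. -/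
def Grz3sem : Set MF := {φ | ∀ (W : Type) (R : W → W → Prop),
  Reflexive R → Transitive R → (∀ x y, R x y → R y x → x = y) → (∀ x y, R x y ∨ R y x) →
  (¬ ∃ f : ℕ → W, ∀ i, R (f i) (f (i + 1)) ∧ f i ≠ f (i + 1)) →
  ∀ (V : ℕ → W → Prop) (w : W), sat R V w φ}


/-
Substitution instances of tautologies are in `L`. Conversely, read a falsifying
valuation `v` of `φ` into the frame `⟨ω ∪ {ω}, ≥⟩`, making `q` true at the even numbers and `p` true
at `2k` exactly when `v k` holds. Then `α_n` holds only at `2n`, so `β_k` holds at `ω` iff `v k`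
holds; hence `s(φ)` fails at `ω`, and `s(φ) ∉ Grz.3 ⊇ L`.
-/

section Semantics

variable {W : Type} {R : W → W → Prop} {V : ℕ → W → Prop}

lemma sat_neg {w : W} {a : MF} : sat R V w a.neg ↔ ¬ sat R V w a := Iff.rfl

lemma sat_and {w : W} {a b : MF} : sat R V w (a.and b) ↔ sat R V w a ∧ sat R V w b := by
  simp only [MF.and, MF.neg, sat]
  tauto

lemma sat_dia {w : W} {a : MF} : sat R V w a.dia ↔ ∃ u, R w u ∧ sat R V u a := by
  simp only [MF.dia, MF.neg, sat, imp_false, not_forall, not_not, exists_prop]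

lemma sat_subst (s : ℕ → MF) (φ : MF) (w : W) :
    sat R V w (subst s φ) ↔ sat R (fun n u => sat R V u (s n)) w φ := by
  induction φ generalizing w with
  | var n => rfl
  | bot => rfl
  | imp a b iha ihb => exact imp_congr (iha w) (ihb w)
  | box a ih => exact forall_congr' fun u => imp_congr_right fun _ => ih u

lemma sat_iff_evalb_of_boxFree {φ : MF} (hφ : φ.boxFree) {w : W} {v : ℕ → Bool}
    (hv : ∀ n, V n w ↔ v n = true) : sat R V w φ ↔ evalb v φ = true := by
  induction φ with
  | var n => exact hv n
  | bot => simp [sat, evalb]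
  | imp a b iha ihb =>
    simp only [sat, evalb, iha hφ.1, ihb hφ.2]
    cases evalb v a <;> cases evalb v b <;> decide
  | box a => exact hφ.elim

lemma sat_ge_of_mem_Grz3sem {φ : MF} (hφ : φ ∈ Grz3sem) {X : Type} [LinearOrder X]
    [WellFoundedLT X] (V : ℕ → X → Prop) (x : X) : sat (fun x y => y ≤ x) V x φ := by
  refine hφ X (fun x y => y ≤ x) le_refl (fun _ _ _ hxy hyz => hyz.trans hxy)
    (fun _ _ hxy hyx => le_antisymm hyx hxy) (fun x y => le_total y x) ?_ V x
  rintro ⟨f, hf⟩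
  obtain ⟨i, hi⟩ := WellFounded.not_rel_apply_succ (r := (· < ·)) f
  exact hi ((hf i).1.lt_of_ne' (hf i).2)

end Semantics

section Countermodel

/-- On `ℕ∞`, `q` (variable 1) holds at the even numbers and `p` (variable 0) at those `2k` with
`v k`. -/
def evenVal (v : ℕ → Bool) : ℕ → ℕ∞ → Prop
  | 0, x => ∃ k : ℕ, x = ((2 * k : ℕ) : ℕ∞) ∧ v k = true
  | 1, x => ∃ k : ℕ, x = ((2 * k : ℕ) : ℕ∞)
  | _ + 2, _ => False

variable (v : ℕ → Bool)

lemma sat_delta_iff (n : ℕ) (x : ℕ∞) : sat Rge (evenVal v) x (delta n) ↔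
    ∃ j : ℕ, x = ((2 * j : ℕ) : ℕ∞) ∧ n ≤ j ∧ (n = 0 → j = 0) := by
  induction n generalizing x with
  | zero =>
    simp only [delta, sat, qv, evenVal, Rge]
    constructor
    · intro h
      have hx : x = 0 := by
        by_contra hx
        obtain ⟨k, hk⟩ := h 1 (Order.one_le_iff_ne_zero.mpr hx)
        norm_cast at hk
        omega
      exact ⟨0, by simp [hx], le_rfl, fun _ => rfl⟩
    · rintro ⟨j, rfl, -, hj⟩ u hu
      obtain rfl := hj trivial
      exact ⟨0, by simpa using hu⟩
  | succ n ih =>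
    have hdia : ∀ y, sat Rge (evenVal v) y (delta n).dia ↔ ((2 * n : ℕ) : ℕ∞) ≤ y := by
      simp only [sat_dia, ih, Rge]
      refine fun y => ⟨?_, fun hy => ⟨_, hy, n, rfl, le_rfl, id⟩⟩
      rintro ⟨_, hz, j, rfl, hnj, -⟩
      exact le_trans (Nat.cast_le.mpr (by omega)) hz
    simp only [delta, sat_and, sat_dia, sat_neg, hdia]
    simp only [sat, qv, evenVal, Rge]
    constructor
    · rintro ⟨⟨j, rfl⟩, y, hy, hodd, hny⟩
      lift y to ℕ using ne_top_of_le_ne_top (ENat.natCast_ne_top _) hy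
      norm_cast at hy hny
      refine ⟨j, rfl, ?_, by omega⟩
      by_contra
      exact hodd ⟨n, by norm_cast; omega⟩
    · rintro ⟨j, rfl, hj, -⟩
      refine ⟨⟨j, rfl⟩, ((2 * n + 1 : ℕ) : ℕ∞), by norm_cast; omega, ?_, by norm_cast; omega⟩
      rintro ⟨k, hk⟩
      norm_cast at hk
      omega

lemma sat_alpha_iff (n : ℕ) (x : ℕ∞) :
    sat Rge (evenVal v) x (alpha n) ↔ x = ((2 * n : ℕ) : ℕ∞) := by
  simp only [alpha, sat_and, sat_neg, sat_delta_iff]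
  constructor
  · rintro ⟨⟨j, rfl, hnj, hn0⟩, hnot⟩
    have : j = n := by
      by_contra hjn
      exact hnot ⟨j, rfl, by omega, by omega⟩
    rw [this]
  · rintro rfl
    refine ⟨⟨n, rfl, le_rfl, id⟩, ?_⟩
    rintro ⟨j, hj, hnj, -⟩
    rw [Nat.cast_inj] at hj
    omega

lemma sat_beta_top_iff (n : ℕ) : sat Rge (evenVal v) ⊤ (beta n) ↔ v n = true := by
  simp only [beta, sat_dia, sat_and, sat_alpha_iff]
  constructor
  · rintro ⟨-, -, ⟨k, rfl, hk⟩, hkn⟩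
    rw [Nat.cast_inj] at hkn
    rwa [show k = n by omega] at hk
  · exact fun h => ⟨_, le_top, ⟨n, rfl, h⟩, rfl⟩

end Countermodel

/-- for Cl ⊆ L ⊆ Grz.3 closed under substitution, a modality-free φ is a
classical tautology iff its substitution instance (p_k ↦ β_k) belongs to L. -/
theorem taut_iff_subst_beta_mem (L : Set MF)
    (hsub : ∀ (φ : MF) (s : ℕ → MF), φ ∈ L → subst s φ ∈ L)
    (hCl : Cl ⊆ L) (hG : L ⊆ Grz3sem) :
    ∀ φ : MF, φ.boxFree → (φ ∈ Cl ↔ subst (fun k => beta k) φ ∈ L) := by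
  intro φ hφ
  refine ⟨fun htaut => hsub φ _ (hCl htaut), fun hL => ⟨hφ, fun v => ?_⟩⟩
  have hsat := sat_ge_of_mem_Grz3sem (hG hL) (evenVal v) ⊤
  rwa [sat_subst, sat_iff_evalb_of_boxFree hφ (sat_beta_top_iff v)] at hsat
end

section
/- Every R-path in the frame F'' (of the variable-free reduction) has length at most k+2 where it passes through the k-th chain; in particular, F'' contains no infinite R-path and no R-cycle, so R on F'' is converse well-founded and irreflexive. -/
/- Two rank functions drive the argument. The height `k - m` of `w^k_m` bounds the length of any
path leaving it, and strictly drops along `R` (with `w` at height `⊤` and `w*` at `0`), which also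
gives converse well-foundedness. The depth `m + 1` of `w^k_m` bounds the length of any path
reaching it, and strictly grows along `R`. Together a path through `w^k_m` has length at most
`(m + 1) + (k - m) = k + 1`. -/

section RankAlongPaths

variable {α : Type*} {r : α → α → Prop} {f : ℕ → α}

theorem rank_add_length_le_of_strictAnti {μ : α → ℕ∞} (hμ : ∀ ⦃x y⦄, r x y → μ y < μ x) {n : ℕ}
    (hf : ∀ j < n, r (f j) (f (j + 1))) : μ (f n) + n ≤ μ (f 0) := by
  induction n with
  | zero => simp
  | succ n ih =>
    calc μ (f (n + 1)) + ↑(n + 1) = μ (f (n + 1)) + 1 + n := by push_cast; ring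
      _ ≤ μ (f n) + n := by gcongr; exact Order.add_one_le_of_lt (hμ (hf n (by omega)))
      _ ≤ μ (f 0) := ih fun j hj => hf j (by omega)

theorem rank_add_length_le_of_strictMono {ν : α → ℕ} (hν : ∀ ⦃x y⦄, r x y → ν x < ν y) {n : ℕ}
    (hf : ∀ j < n, r (f j) (f (j + 1))) : ν (f 0) + n ≤ ν (f n) := by
  induction n with
  | zero => rfl
  | succ n ih =>
    have := hν (hf n (by omega))
    have := ih fun j hj => hf j (by omega)
    omega

end RankAlongPaths

namespace CW

def height : CW → ℕ∞
  | root => ⊤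
  | sink => 0
  | chain k m => ((k - m : ℕ) : ℕ∞)

/-- `w*` gets depth `2` because it is seen from `w^k_0`, of depth `1`. -/
def depth : CW → ℕ
  | root => 0
  | sink => 2
  | chain _ m => m + 1

theorem depth_lt_of_Rc {v : ℕ → Bool} {a b : CW} (h : Rc v a b) : a.depth < b.depth := by
  cases a <;> cases b <;> simp_all [Rc, depth]

end CW

theorem height_lt_of_Rf {v : ℕ → Bool} {x y : W''} (h : Rf v x y) :
    y.val.height < x.val.height := by
  rcases x with ⟨_ | _ | ⟨k, m⟩, hx⟩ <;> rcases y with ⟨_ | _ | ⟨k', m'⟩, hy⟩ <;>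
    simp only [Rf, Rc] at h <;> simp only [CW.height, CW.valid] at hx hy ⊢
  · exact ENat.natCast_lt_top 0
  · exact ENat.natCast_lt_top _
  · norm_cast; omega
  · norm_cast; omega

theorem wellFounded_flip_Rf (v : ℕ → Bool) : WellFounded (flip (Rf v)) :=
  Subrelation.wf (fun h => height_lt_of_Rf h)
    (InvImage.wf (fun x : W'' => x.val.height) wellFounded_lt)

theorem length_le_of_path_through_chain {v : ℕ → Bool} {f : ℕ → W''} {n : ℕ}
    (hf : ∀ i, i < n → Rf v (f i) (f (i + 1))) {k m i : ℕ} (hi : i ≤ n)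
    (hfi : (f i).val = CW.chain k m) : n ≤ k + 1 := by
  have hmk : m ≤ k := by
    have := (f i).property
    simp only [hfi, CW.valid] at this
    exact this.2
  have hbefore : i ≤ m + 1 := by
    have := rank_add_length_le_of_strictMono (r := Rf v) (ν := fun x : W'' => x.val.depth) (n := i)
      (fun _ _ h => CW.depth_lt_of_Rc h) fun j hj => hf j (by omega)
    simp only [hfi, CW.depth] at this
    omega
  have hafter : n - i ≤ k - m := by
    have := rank_add_length_le_of_strictAnti (r := Rf v) (f := fun j => f (i + j)) (n := n - i)
      (fun _ _ h => height_lt_of_Rf h) fun j hj => hf (i + j) (by omega)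
    simp only [add_zero, hfi, CW.height] at this
    exact_mod_cast le_trans le_add_self this
  omega

/-- every R-path in F'' passing through the k-th chain has length at most
k+2; in particular F'' has no infinite R-path and no R-cycle: R is irreflexive and
converse well-founded. -/
theorem F''_paths_finite (v : ℕ → Bool) :
    (∀ (f : ℕ → W'') (n : ℕ), (∀ i, i < n → Rf v (f i) (f (i + 1))) →
      ∀ (k m i : ℕ), i ≤ n → (f i).val = CW.chain k m → n ≤ k + 2) ∧
    (¬ ∃ f : ℕ → W'', ∀ i, Rf v (f i) (f (i + 1))) ∧
    (∀ x : W'', ¬ Rf v x x) ∧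
    WellFounded (fun x y : W'' => Rf v y x) := by
  have hwf := wellFounded_flip_Rf v
  refine ⟨fun f n hf k m i hi hfi => ?_, ?_, fun x => hwf.irrefl.irrefl x, hwf⟩
  · have := length_le_of_path_through_chain hf hi hfi
    omega
  · rintro ⟨f, hf⟩
    have : IsWellFounded W'' (flip (Rf v)) := ⟨hwf⟩
    obtain ⟨n, hn⟩ := WellFounded.not_rel_apply_succ (r := flip (Rf v)) f
    exact hn (hf n)
end
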